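/- arXiv:2307.11059 — 4 statements merged into one kernel-verified Lean document; each statement's English description precedes it below -/
import Mathlib

section
/- Let x ∈ I^n be a point that is not a vertex of the unit cube I^n (i.e., at least one coordinate x_i lies in the open interval (0,1)), and fix an integer k with 1 ≤ k ≤ n. Then for every integer z ∈ ℤ there exists a finite disjoint union of k-boxes DU ∈ R_k(I^n) such that m_DU(x) = z. -/
open scoped Classical BigOperators

namespace KIncr

/-- Points of the ambient space `ℝ^n`. -/
abbrev Pt (n : ℕ) := Fin n → ℝ

/-- Membership in the unit cube `I^n = [0,1]^n`. -/
def inCube {n : ℕ} (x : Pt n) : Prop := ∀ i, x i ∈ Set.Icc (0:ℝ) 1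

/-- The unit cube as a set. -/
def cubeSet (n : ℕ) : Set (Pt n) := {x | inCube x}

/-- Vertices of the unit cube `I^n`. -/
def isCubeVertex {n : ℕ} (x : Pt n) : Prop := ∀ i, x i = 0 ∨ x i = 1

/-- A (formal) box, given by its lower-left and upper-right corners. -/
structure Box (n : ℕ) where
  lo : Pt n
  hi : Pt n

/-- `R` is a `k`-box in `I^n`: exactly `k` coordinates are nondegenerate. -/
def Box.IsKBox {n : ℕ} (k : ℕ) (R : Box n) : Prop :=
  inCube R.lo ∧ inCube R.hi ∧ (∀ i, R.lo i ≤ R.hi i) ∧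
    (Finset.univ.filter (fun i => R.lo i < R.hi i)).card = k

/-- `v` is a vertex of the box `R`. -/
def Box.IsVertex {n : ℕ} (R : Box n) (v : Pt n) : Prop :=
  ∀ i, v i = R.lo i ∨ v i = R.hi i

/-- The (finite) set of vertices of a box. -/
noncomputable def Box.vertices {n : ℕ} (R : Box n) : Finset (Pt n) :=
  Finset.image (fun ε : Fin n → Bool => fun i => if ε i then R.hi i else R.lo i)
    Finset.univ

/-- The sign `(-1)^(m-(n-k))` of a vertex `v` of a `k`-box, where
`m = #{i : v i = lo i}`;  since `m ≥ n - k`, this equals `(-1)^(m+(n-k))`. -/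
noncomputable def Box.sign {n : ℕ} (k : ℕ) (R : Box n) (v : Pt n) : ℤ :=
  (-1) ^ ((Finset.univ.filter (fun i => v i = R.lo i)).card + (n - k))

/-- The multiplicity `m_R(u)` of a point `u` with respect to a `k`-box `R`. -/
noncomputable def Box.mult {n : ℕ} (k : ℕ) (R : Box n) (u : Pt n) : ℤ :=
  if R.IsVertex u then R.sign k u else 0

/-- `V_{A,k}(R) = ∑_{v ∈ ver R} sign_R(v) · A(v)`. -/
noncomputable def Vvol {n : ℕ} (k : ℕ) (A : Pt n → ℝ) (R : Box n) : ℝ :=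
  ∑ v ∈ R.vertices, (R.sign k v : ℝ) * A v

/-- A function is `k`-increasing on `D` if `V_{A,k}(R) ≥ 0` for every `k`-box
with all vertices in `D`. -/
def KIncreasingOn {n : ℕ} (k : ℕ) (D : Set (Pt n)) (A : Pt n → ℝ) : Prop :=
  ∀ R : Box n, R.IsKBox k → (∀ v ∈ R.vertices, v ∈ D) → 0 ≤ Vvol k A R

/-- The multiplicity `m_DU(u)` of a point with respect to a formal (multiset)
disjoint union of `k`-boxes. -/
noncomputable def multDU {n : ℕ} (k : ℕ) (DU : Multiset (Box n)) (u : Pt n) : ℤ :=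
  (DU.map (fun R => R.mult k u)).sum

/-- `DU ∈ R_k(D)`: every box of the multiset `DU` is a `k`-box with all its
vertices in `D`. -/
def memRk {n : ℕ} (k : ℕ) (D : Set (Pt n)) (DU : Multiset (Box n)) : Prop :=
  ∀ R ∈ DU, R.IsKBox k ∧ ∀ v ∈ R.vertices, v ∈ D

/-- `L_k^{(A,B)}(DU) = ∑_{m_DU(u)>0} m_DU(u)·B(u) + ∑_{m_DU(u)<0} m_DU(u)·A(u)`. -/
noncomputable def Lk {n : ℕ} (k : ℕ) (A B : Pt n → ℝ) (DU : Multiset (Box n)) : ℝ :=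
  ∑ u ∈ DU.toFinset.biUnion Box.vertices,
    (if 0 < multDU k DU u then (multDU k DU u : ℝ) * B u
     else if multDU k DU u < 0 then (multDU k DU u : ℝ) * A u else 0)

/-- `P⁻_{k,D}^{(A,B)}(x)`, with the Mathlib convention `sInf ∅ = 0`. -/
noncomputable def Pneg {n : ℕ} (k : ℕ) (D : Set (Pt n)) (A B : Pt n → ℝ) (x : Pt n) : ℝ :=
  sInf {r : ℝ | ∃ DU : Multiset (Box n), memRk k D DU ∧ multDU k DU x < 0 ∧
    r = Lk k A B DU / |(multDU k DU x : ℝ)|}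

/-- `P⁺_{k,D}^{(A,B)}(x)`, with the Mathlib convention `sInf ∅ = 0`. -/
noncomputable def Ppos {n : ℕ} (k : ℕ) (D : Set (Pt n)) (A B : Pt n → ℝ) (x : Pt n) : ℝ :=
  sInf {r : ℝ | ∃ DU : Multiset (Box n), memRk k D DU ∧ 0 < multDU k DU x ∧
    r = Lk k A B DU / |(multDU k DU x : ℝ)|}

/-- `γ_{k,D}^{(A,B)}(x) = min {P⁻_{k,D}^{(A,B)}(x), B(x) - A(x)}`. -/
noncomputable def gammaK {n : ℕ} (k : ℕ) (D : Set (Pt n)) (A B : Pt n → ℝ) (x : Pt n) : ℝ :=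
  min (Pneg k D A B x) (B x - A x)

/-- `δ_{k,D}^{(A,B)}(x) = min {P⁺_{k,D}^{(A,B)}(x), B(x) - A(x)}`. -/
noncomputable def deltaK {n : ℕ} (k : ℕ) (D : Set (Pt n)) (A B : Pt n → ℝ) (x : Pt n) : ℝ :=
  min (Ppos k D A B x) (B x - A x)

/-- A dense countably infinite mesh `D = ∏ δᵢ` in `I^n`. -/
def IsMesh {n : ℕ} (D : Set (Pt n)) : Prop :=
  ∃ δ : Fin n → Set ℝ,
    (∀ i, δ i ⊆ Set.Icc (0:ℝ) 1 ∧ (δ i).Countable ∧ (δ i).Infinite ∧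
      Set.Icc (0:ℝ) 1 ⊆ closure (δ i) ∧ (0:ℝ) ∈ δ i ∧ (1:ℝ) ∈ δ i) ∧
    D = {x : Pt n | ∀ i, x i ∈ δ i}

/-- `A` is grounded: it vanishes whenever some coordinate is `0`. -/
def Grounded {n : ℕ} (A : Pt n → ℝ) : Prop :=
  ∀ x : Pt n, inCube x → (∃ i, x i = 0) → A x = 0

/-- `A` is 1-increasing (increasing in each variable). -/
def OneIncreasing {n : ℕ} (A : Pt n → ℝ) : Prop :=
  ∀ x y : Pt n, inCube x → inCube y → (∀ i, x i ≤ y i) → A x ≤ A y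

/-- `A` has uniform marginals. -/
def UniformMarginals {n : ℕ} (A : Pt n → ℝ) : Prop :=
  ∀ i : Fin n, ∀ t ∈ Set.Icc (0:ℝ) 1, A (Function.update (fun _ => (1:ℝ)) i t) = t

/-- `A` is a standardized function. -/
def Standardized {n : ℕ} (A : Pt n → ℝ) : Prop :=
  Grounded A ∧ OneIncreasing A ∧ A (fun _ => (1:ℝ)) = 1

/-- `A` is a semicopula. -/
def Semicopula {n : ℕ} (A : Pt n → ℝ) : Prop :=
  Grounded A ∧ OneIncreasing A ∧ UniformMarginals A

/-- `A` maps the unit cube into `I = [0,1]`. -/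
def MapsToI {n : ℕ} (A : Pt n → ℝ) : Prop :=
  ∀ x : Pt n, inCube x → A x ∈ Set.Icc (0:ℝ) 1

/-- Condition S: all discontinuities of all sections of `A` lie in the
countable set `S`. -/
def CondS {n : ℕ} (A : Pt n → ℝ) (S : Set ℝ) : Prop :=
  ∀ u : Pt n, inCube u → ∀ i : Fin n, ∀ t ∈ Set.Icc (0:ℝ) 1, t ∉ S →
    ContinuousWithinAt (fun s => A (Function.update u i s)) (Set.Icc (0:ℝ) 1) t

/-- A quasi-copula: a semicopula that is 1-Lipschitz w.r.t. the ℓ¹-norm. -/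
def QuasiCopula {n : ℕ} (A : Pt n → ℝ) : Prop :=
  Semicopula A ∧ ∀ x y : Pt n, inCube x → inCube y → |A x - A y| ≤ ∑ i, |x i - y i|

end KIncr

open KIncr
/-- Lemma 2.2: existence of a disjoint union of k-boxes with
prescribed multiplicity at a non-vertex point of the unit cube. -/
theorem stmt0 (n k : ℕ) (hn : 1 ≤ n) (hk1 : 1 ≤ k) (hkn : k ≤ n)
    (x : Pt n) (hx : inCube x) (hxv : ∃ i, x i ∈ Set.Ioo (0:ℝ) 1) :
    ∀ z : ℤ, ∃ DU : Multiset (Box n),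
      memRk k (cubeSet n) DU ∧ multDU k DU x = z := by
  obtain ⟨i0, hi00, hi01⟩ := hxv
  obtain ⟨S, hSsub, hScard⟩ := Finset.exists_superset_card_eq (s := ({i0} : Finset (Fin n)))
    (by simpa using hk1) (by simpa using hkn)
  have hi0S : i0 ∈ S := hSsub (Finset.mem_singleton_self i0)
  set Rb : Bool → Box n := fun b =>
    { lo := fun i => if i = i0 then (if b then x i0 else 0)
        else if i ∈ S then (if x i < 1 then x i else 0) else x i,
      hi := fun i => if i = i0 then (if b then 1 else x i0)
        else if i ∈ S then 1 else x i } with hRb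
  have hxi : ∀ i, 0 ≤ x i ∧ x i ≤ 1 := fun i => ⟨(hx i).1, (hx i).2⟩
  have hlo : ∀ b i, (Rb b).lo i ∈ Set.Icc (0:ℝ) 1 := by
    intro b i
    refine Set.mem_Icc.2 ⟨?_, ?_⟩ <;>
    · simp only [hRb]
      split_ifs <;> linarith [(hxi i).1, (hxi i).2, (hxi i0).1, (hxi i0).2]
  have hhi : ∀ b i, (Rb b).hi i ∈ Set.Icc (0:ℝ) 1 := by
    intro b i
    refine Set.mem_Icc.2 ⟨?_, ?_⟩ <;>
    · simp only [hRb]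
      split_ifs <;> linarith [(hxi i).1, (hxi i).2, (hxi i0).1, (hxi i0).2]
  have hle : ∀ b i, (Rb b).lo i ≤ (Rb b).hi i := by
    intro b i
    simp only [hRb]
    split_ifs <;> linarith [(hxi i).1, (hxi i).2, (hxi i0).1, (hxi i0).2]
  have hfilt : ∀ b, (Finset.univ.filter (fun i => (Rb b).lo i < (Rb b).hi i)) = S := by
    intro b
    ext i
    simp only [Finset.mem_filter, Finset.mem_univ, true_and, hRb]
    by_cases h : i = i0
    · subst h
      cases b <;> simp [hi0S] <;> [exact hi00; exact hi01]
    · by_cases hS : i ∈ S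
      · simp only [if_neg h, if_pos hS, hS, iff_true]
        split_ifs <;> linarith
      · simp [h, hS]
  have hbox : ∀ b, (Rb b).IsKBox k :=
    fun b => ⟨fun i => hlo b i, fun i => hhi b i, fun i => hle b i, by rw [hfilt b, hScard]⟩
  have hver : ∀ b, ∀ v ∈ (Rb b).vertices, v ∈ cubeSet n := by
    intro b v hv
    simp only [Box.vertices, Finset.mem_image, Finset.mem_univ, true_and] at hv
    obtain ⟨ε, rfl⟩ := hv
    intro i
    by_cases hε : ε i <;> simp [hε, hlo b i, hhi b i]
  have hvx : ∀ b, (Rb b).IsVertex x := by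
    intro b i
    by_cases h : i = i0
    · subst h; cases b <;> simp [hRb]
    · by_cases hS : i ∈ S
      · rcases lt_or_ge (x i) 1 with h1 | h1
        · left; simp [hRb, h, hS, h1]
        · right; have : x i = 1 := le_antisymm (hxi i).2 h1
          simp [hRb, h, hS, this]
      · left; simp [hRb, h, hS]
  -- vertex sign relationship
  have hfx : (Finset.univ.filter (fun i => x i = (Rb true).lo i))
      = insert i0 (Finset.univ.filter (fun i => x i = (Rb false).lo i)) := by
    ext i
    by_cases h : i = i0
    · subst h; simp [hRb]
    · simp [hRb, h]
  have hi0nf : i0 ∉ (Finset.univ.filter (fun i => x i = (Rb false).lo i)) := by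
    simp [hRb]; linarith
  have hmultT : ∀ b, (Rb b).mult k x = (Rb b).sign k x := by
    intro b; simp [Box.mult, hvx b]
  have hsignneg : (Rb true).sign k x = -((Rb false).sign k x) := by
    have hcardeq : (Finset.univ.filter (fun i => x i = (Rb true).lo i)).card
        = (Finset.univ.filter (fun i => x i = (Rb false).lo i)).card + 1 := by
      rw [hfx, Finset.card_insert_of_notMem hi0nf]
    show ((-1:ℤ) ^ ((Finset.univ.filter (fun i => x i = (Rb true).lo i)).card + (n - k)))
      = -((-1:ℤ) ^ ((Finset.univ.filter (fun i => x i = (Rb false).lo i)).card + (n - k)))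
    rw [hcardeq, show ∀ m : ℕ, m + 1 + (n - k) = m + (n - k) + 1 from fun m => by omega,
      pow_succ]
    ring
  have hpm : (Rb false).sign k x = 1 ∨ (Rb false).sign k x = -1 := by
    rcases Nat.even_or_odd ((Finset.univ.filter (fun i => x i = (Rb false).lo i)).card + (n - k)) with he | ho
    · exact Or.inl he.neg_one_pow
    · exact Or.inr ho.neg_one_pow
  -- pick boxes with multiplicity +1 and -1
  obtain ⟨Rp, Rm, hRpbox, hRpver, hRmbox, hRmver, hRp1, hRm1⟩ :
      ∃ Rp Rm : Box n, Rp.IsKBox k ∧ (∀ v ∈ Rp.vertices, v ∈ cubeSet n) ∧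
        Rm.IsKBox k ∧ (∀ v ∈ Rm.vertices, v ∈ cubeSet n) ∧
        Rp.mult k x = 1 ∧ Rm.mult k x = -1 := by
    rcases hpm with h1 | h1
    · exact ⟨Rb false, Rb true, hbox false, hver false, hbox true, hver true,
        by rw [hmultT]; exact h1, by rw [hmultT, hsignneg, h1]⟩
    · exact ⟨Rb true, Rb false, hbox true, hver true, hbox false, hver false,
        by rw [hmultT, hsignneg, h1]; ring, by rw [hmultT]; exact h1⟩
  intro z
  refine ⟨Multiset.replicate z.toNat Rp + Multiset.replicate (-z).toNat Rm, ?_, ?_⟩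
  · intro R hR
    rcases Multiset.mem_add.1 hR with h | h
    · rw [Multiset.eq_of_mem_replicate h]; exact ⟨hRpbox, hRpver⟩
    · rw [Multiset.eq_of_mem_replicate h]; exact ⟨hRmbox, hRmver⟩
  · simp only [multDU, Multiset.map_add, Multiset.sum_add, Multiset.map_replicate,
      Multiset.sum_replicate, hRp1, hRm1, nsmul_eq_mul, mul_one, mul_neg_one]
    push_cast
    omega
end

section
/- Let D be a dense countably infinite mesh in I^n and fix an integer k with 1 ≤ k ≤ n. Let A, B : D → I be functions with A ≤ B and L_k^{(A,B)}(DU) ≥ 0 for all DU ∈ R_k(D), and assume A(v) = B(v) for all vertices v of the unit cube I^n (all such vertices belong to D). Then for every x ∈ D, P⁻_{k,D}^{(A,B)}(x) + P⁺_{k,D}^{(A,B)}(x) ≥ B(x) − A(x). -/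
open scoped Classical BigOperators

namespace KIncr

variable {n : ℕ}

lemma mem_vertices {R : Box n} {v : Pt n} : v ∈ R.vertices ↔ R.IsVertex v := by
  constructor
  · rintro hv
    simp only [Box.vertices, Finset.mem_image] at hv
    obtain ⟨ε, -, rfl⟩ := hv
    intro i
    by_cases h : ε i <;> simp [h]
  · intro hv
    simp only [Box.vertices, Finset.mem_image]
    refine ⟨fun i => decide (v i = R.hi i), Finset.mem_univ _, ?_⟩
    funext i
    by_cases hh : v i = R.hi i
    · simp [hh]
    · rcases hv i with h | h
      · simp [hh, h.symm]
      · exact absurd h hh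

noncomputable def gfun (A B : Pt n → ℝ) (u : Pt n) (m : ℤ) : ℝ :=
  if 0 < m then (m:ℝ) * B u else if m < 0 then (m:ℝ) * A u else 0

lemma gfun_eq_max {A B : Pt n → ℝ} {u : Pt n} (h : A u ≤ B u) (m : ℤ) :
    gfun A B u m = max ((m:ℝ) * A u) ((m:ℝ) * B u) := by
  unfold gfun
  rcases lt_trichotomy m 0 with hm | hm | hm
  · rw [if_neg (by omega), if_pos hm, max_eq_left]
    apply mul_le_mul_of_nonpos_left h
    exact_mod_cast hm.le
  · subst hm; simp
  · rw [if_pos hm, max_eq_right]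
    apply mul_le_mul_of_nonneg_left h
    exact_mod_cast hm.le

lemma Lk_eq_sum (k : ℕ) (A B : Pt n → ℝ) (DU : Multiset (Box n)) (s : Finset (Pt n))
    (hs : ∀ R ∈ DU, ∀ v ∈ R.vertices, v ∈ s) :
    Lk k A B DU = ∑ u ∈ s, gfun A B u (multDU k DU u) := by
  show (∑ u ∈ DU.toFinset.biUnion Box.vertices, gfun A B u (multDU k DU u)) = _
  apply Finset.sum_subset
  · intro u hu
    simp only [Finset.mem_biUnion, Multiset.mem_toFinset] at hu
    obtain ⟨R, hR, hv⟩ := hu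
    exact hs R hR u hv
  · intro u hu hnu
    have h0 : multDU k DU u = 0 := by
      unfold multDU
      apply Multiset.sum_eq_zero
      intro z hz
      simp only [Multiset.mem_map] at hz
      obtain ⟨R, hR, rfl⟩ := hz
      apply if_neg
      intro hvert
      exact hnu (Finset.mem_biUnion.mpr ⟨R, Multiset.mem_toFinset.mpr hR, mem_vertices.mpr hvert⟩)
    simp [gfun, h0]

lemma multDU_add (k : ℕ) (E F : Multiset (Box n)) (u : Pt n) :
    multDU k (E + F) u = multDU k E u + multDU k F u := by
  simp [multDU]

lemma multDU_nsmul (k : ℕ) (c : ℕ) (E : Multiset (Box n)) (u : Pt n) :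
    multDU k (c • E) u = c * multDU k E u := by
  unfold multDU
  induction c with
  | zero => simp
  | succ m ih =>
    rw [succ_nsmul, Multiset.map_add, Multiset.sum_add, ih]
    push_cast; ring

lemma gfun_combo {A B : Pt n → ℝ} {u : Pt n} (h : A u ≤ B u) (P Q : ℕ) (m1 m2 : ℤ) :
    gfun A B u ((Q:ℤ) * m1 + (P:ℤ) * m2) ≤ (Q:ℝ) * gfun A B u m1 + (P:ℝ) * gfun A B u m2 := by
  rw [gfun_eq_max h, gfun_eq_max h, gfun_eq_max h]
  have h1 : (((Q:ℤ) * m1 + (P:ℤ) * m2 : ℤ):ℝ) * A u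
      = (Q:ℝ) * ((m1:ℝ) * A u) + (P:ℝ) * ((m2:ℝ) * A u) := by push_cast; ring
  have h2 : (((Q:ℤ) * m1 + (P:ℤ) * m2 : ℤ):ℝ) * B u
      = (Q:ℝ) * ((m1:ℝ) * B u) + (P:ℝ) * ((m2:ℝ) * B u) := by push_cast; ring
  rw [h1, h2, mul_max_of_nonneg _ _ (by positivity : (0:ℝ) ≤ (Q:ℝ)),
    mul_max_of_nonneg _ _ (by positivity : (0:ℝ) ≤ (P:ℝ))]
  exact max_le (add_le_add (le_max_left _ _) (le_max_left _ _))
    (add_le_add (le_max_right _ _) (le_max_right _ _))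


lemma exists_box_signed (n k : ℕ) (hk1 : 1 ≤ k) (hkn : k ≤ n)
    (δ : Fin n → Set ℝ)
    (hsub : ∀ i, δ i ⊆ Set.Icc (0:ℝ) 1) (h0m : ∀ i, (0:ℝ) ∈ δ i) (h1m : ∀ i, (1:ℝ) ∈ δ i)
    (x : Pt n) (hx : ∀ i, x i ∈ δ i)
    (i₀ : Fin n) (hx0 : x i₀ ≠ 0) (hx1 : x i₀ ≠ 1) (ε : ℤ) (hε : ε = 1 ∨ ε = -1) :
    ∃ R : Box n, R.IsKBox k ∧ (∀ v ∈ R.vertices, ∀ i, v i ∈ δ i) ∧ R.mult k x = ε := by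
  obtain ⟨T, hTsub, hTcard⟩ := Finset.exists_subset_card_eq
    (show k - 1 ≤ (Finset.univ.erase i₀).card by
      rw [Finset.card_erase_of_mem (Finset.mem_univ _), Finset.card_univ, Fintype.card_fin]
      omega)
  have hi₀T : i₀ ∉ T := fun h => (Finset.mem_erase.mp (hTsub h)).1 rfl
  have hxI : ∀ i, x i ∈ Set.Icc (0:ℝ) 1 := fun i => hsub i (hx i)
  set t : ℕ := (T.filter (fun i => x i = 0)).card with ht
  have construct : ∀ b : Bool, ∃ R : Box n, R.IsKBox k ∧
      (∀ v ∈ R.vertices, ∀ i, v i ∈ δ i) ∧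
      R.mult k x = (-1)^(t + (if b then 1 else 0)) := by
    intro b
    set y : Pt n := fun i => if i = i₀ then (if b then 1 else 0)
      else if i ∈ T then (if x i = 0 then 1 else 0) else x i with hy
    have hyδ : ∀ i, y i ∈ δ i := by
      intro i; simp only [hy]
      split_ifs <;> first | exact h1m i | exact h0m i | exact hx i
    have hyI : ∀ i, y i ∈ Set.Icc (0:ℝ) 1 := fun i => hsub i (hyδ i)
    refine ⟨⟨fun i => min (x i) (y i), fun i => max (x i) (y i)⟩, ⟨?_, ?_, ?_, ?_⟩, ?_, ?_⟩
    · intro i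
      exact ⟨le_min (hxI i).1 (hyI i).1, le_trans (min_le_left _ _) (hxI i).2⟩
    · intro i
      exact ⟨le_trans (hxI i).1 (le_max_left _ _), max_le (hxI i).2 (hyI i).2⟩
    · intro i; exact min_le_max
    · -- card of nondegenerate coordinates
      have hne : ∀ i, x i ≠ y i ↔ i ∈ insert i₀ T := by
        intro i
        by_cases hi : i = i₀
        · have hyi : y i = if b then 1 else 0 := by simp [hy, hi]
          simp only [hi, Finset.mem_insert, true_or, iff_true]
          rw [← hi, hyi]
          cases b
          · simpa using (hi ▸ hx0 : x i ≠ 0)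
          · simpa using (hi ▸ hx1 : x i ≠ 1)
        · by_cases hiT : i ∈ T
          · simp only [hy, if_neg hi, if_pos hiT, Finset.mem_insert, hiT, or_true, iff_true]
            by_cases h0 : x i = 0
            · simp [h0]
            · simp [h0]
          · simp [hy, hi, hiT]
      have hfilter : Finset.univ.filter
          (fun i => min (x i) (y i) < max (x i) (y i)) = insert i₀ T := by
        ext i
        simp only [Finset.mem_filter, Finset.mem_univ, true_and, min_lt_max]
        exact hne i
      rw [hfilter, Finset.card_insert_of_notMem hi₀T, hTcard]
      omega
    · -- vertices in δ
      intro v hv i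
      have hv' := mem_vertices.mp hv
      have hvi : v i = x i ∨ v i = y i := by
        rcases hv' i with h | h <;> rcases le_total (x i) (y i) with hle | hle
        · left; rw [h]; exact min_eq_left hle
        · right; rw [h]; exact min_eq_right hle
        · right; rw [h]; exact max_eq_right hle
        · left; rw [h]; exact max_eq_left hle
      rcases hvi with h | h
      · rw [h]; exact hx i
      · rw [h]; exact hyδ i
    · -- multiplicity
      have hvert : Box.IsVertex ⟨fun i => min (x i) (y i), fun i => max (x i) (y i)⟩ x := by
        intro i
        rcases le_total (x i) (y i) with hle | hle
        · exact Or.inl (min_eq_left hle).symm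
        · exact Or.inr (max_eq_left hle).symm
      rw [Box.mult, if_pos hvert, Box.sign]
      have hkey : ∀ i : Fin n, (x i ≤ y i) ↔
          (i ∉ insert i₀ T ∨ (i ∈ T ∧ x i = 0) ∨ (i = i₀ ∧ b = true)) := by
        intro i
        by_cases hi : i = i₀
        · have hyi : y i = if b then 1 else 0 := by simp [hy, hi]
          have hrhs : (i ∉ insert i₀ T ∨ (i ∈ T ∧ x i = 0) ∨ (i = i₀ ∧ b = true)) ↔
              (b = true) := by
            simp [hi, hi₀T]
          rw [hrhs, hyi]
          cases b
          · simp only [Bool.false_eq_true, if_false, iff_false, not_le]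
            have : 0 ≤ x i := (hxI i).1
            have : x i ≠ 0 := hi ▸ hx0
            cases lt_or_eq_of_le ‹0 ≤ x i› with
            | inl h => exact h
            | inr h => exact absurd h.symm ‹x i ≠ 0›
          · simp [(hxI i).2]
        · by_cases hiT : i ∈ T
          · simp only [hy, if_neg hi, if_pos hiT, Finset.mem_insert, hiT, or_true,
              not_true_eq_false, false_or, hi, false_and, or_false, true_and]
            by_cases h0 : x i = 0
            · simp [h0]
            · simp only [if_neg h0, h0, iff_false]
              intro hle
              exact h0 (le_antisymm hle (hxI i).1)
          · simp only [hy, if_neg hi, if_neg hiT, le_refl, true_iff]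
            left
            simp [hi, hiT]
      have hF : Finset.univ.filter (fun i => x i = min (x i) (y i)) =
          ((Finset.univ \ insert i₀ T) ∪ T.filter (fun i => x i = 0)) ∪
            (if b then {i₀} else ∅) := by
        ext i
        simp only [Finset.mem_filter, Finset.mem_univ, true_and, Finset.mem_union,
          Finset.mem_sdiff, Finset.mem_singleton]
        rw [eq_comm, min_eq_left_iff, hkey i]
        cases b <;> simp <;> tauto
      have hd1 : Disjoint (Finset.univ \ insert i₀ T) (T.filter (fun i => x i = 0)) := by
        rw [Finset.disjoint_left]
        intro a ha hb
        exact (Finset.mem_sdiff.mp ha).2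
          (Finset.mem_insert_of_mem (Finset.mem_filter.mp hb).1)
      have hd2 : Disjoint ((Finset.univ \ insert i₀ T) ∪ T.filter (fun i => x i = 0))
          (if b then ({i₀} : Finset (Fin n)) else ∅) := by
        rw [Finset.disjoint_right]
        intro a ha
        cases b
        · simp at ha
        · simp only [if_true, Finset.mem_singleton] at ha
          subst ha
          intro hmem
          rcases Finset.mem_union.mp hmem with h | h
          · exact (Finset.mem_sdiff.mp h).2 (Finset.mem_insert_self _ _)
          · exact hi₀T (Finset.mem_filter.mp h).1
      have hcardc : (if b then ({i₀} : Finset (Fin n)) else ∅).card = (if b then 1 else 0) := by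
        cases b <;> simp
      have hcards : (Finset.univ \ insert i₀ T).card = n - k := by
        rw [Finset.card_sdiff_of_subset (Finset.subset_univ _), Finset.card_univ, Fintype.card_fin,
          Finset.card_insert_of_notMem hi₀T, hTcard]
        omega
      rw [hF, Finset.card_union_of_disjoint hd2, Finset.card_union_of_disjoint hd1,
        hcards, hcardc, ← ht]
      have hexp : (n - k + t + (if b then 1 else 0)) + (n - k)
          = (t + (if b then 1 else 0)) + 2 * (n - k) := by omega
      rw [hexp, pow_add, pow_mul, neg_one_sq, one_pow, mul_one]
  rcases Nat.even_or_odd t with hpar | hpar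
  · rcases hε with rfl | rfl
    · obtain ⟨R, h1', h2', h3'⟩ := construct false
      exact ⟨R, h1', h2', by rw [h3']; simpa using hpar.neg_one_pow⟩
    · obtain ⟨R, h1', h2', h3'⟩ := construct true
      refine ⟨R, h1', h2', by rw [h3']; simpa using (hpar.add_one).neg_one_pow⟩
  · rcases hε with rfl | rfl
    · obtain ⟨R, h1', h2', h3'⟩ := construct true
      refine ⟨R, h1', h2', by rw [h3']; simpa using (Odd.add_one hpar).neg_one_pow⟩
    · obtain ⟨R, h1', h2', h3'⟩ := construct false
      exact ⟨R, h1', h2', by rw [h3']; simpa using hpar.neg_one_pow⟩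

lemma key_combo {n : ℕ} (k : ℕ) (D : Set (Pt n)) (A B : Pt n → ℝ)
    (hAB : ∀ u ∈ D, A u ≤ B u)
    (hL : ∀ DU : Multiset (Box n), memRk k D DU → 0 ≤ Lk k A B DU)
    (x : Pt n) (hxD : x ∈ D)
    (DU1 DU2 : Multiset (Box n)) (h1 : memRk k D DU1) (h2 : memRk k D DU2)
    (hm1 : multDU k DU1 x < 0) (hm2 : 0 < multDU k DU2 x) :
    B x - A x ≤ Lk k A B DU1 / |(multDU k DU1 x : ℝ)| +
      Lk k A B DU2 / |(multDU k DU2 x : ℝ)| := by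
  set P : ℕ := (-multDU k DU1 x).toNat with hPdef
  set Q : ℕ := (multDU k DU2 x).toNat with hQdef
  have hP : (P:ℤ) = -multDU k DU1 x := Int.toNat_of_nonneg (by omega)
  have hQ : (Q:ℤ) = multDU k DU2 x := Int.toNat_of_nonneg (by omega)
  have hPpos : 0 < P := by omega
  have hQpos : 0 < Q := by omega
  set s : Finset (Pt n) := insert x
    (DU1.toFinset.biUnion Box.vertices ∪ DU2.toFinset.biUnion Box.vertices) with hs
  have hxs : x ∈ s := Finset.mem_insert_self _ _
  have hsD : ∀ u ∈ s, u ∈ D := by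
    intro u hu
    rcases Finset.mem_insert.mp hu with rfl | hu
    · exact hxD
    · rcases Finset.mem_union.mp hu with hu | hu
      · obtain ⟨R, hR, hv⟩ := Finset.mem_biUnion.mp hu
        exact (h1 R (Multiset.mem_toFinset.mp hR)).2 u hv
      · obtain ⟨R, hR, hv⟩ := Finset.mem_biUnion.mp hu
        exact (h2 R (Multiset.mem_toFinset.mp hR)).2 u hv
  have hs1 : ∀ R ∈ DU1, ∀ v ∈ R.vertices, v ∈ s := by
    intro R hR v hv
    exact Finset.mem_insert_of_mem (Finset.mem_union_left _
      (Finset.mem_biUnion.mpr ⟨R, Multiset.mem_toFinset.mpr hR, hv⟩))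
  have hs2 : ∀ R ∈ DU2, ∀ v ∈ R.vertices, v ∈ s := by
    intro R hR v hv
    exact Finset.mem_insert_of_mem (Finset.mem_union_right _
      (Finset.mem_biUnion.mpr ⟨R, Multiset.mem_toFinset.mpr hR, hv⟩))
  set comb : Multiset (Box n) := Q • DU1 + P • DU2 with hcomb
  have hmemcomb : ∀ R ∈ comb, R ∈ DU1 ∨ R ∈ DU2 := by
    intro R hR
    rcases Multiset.mem_add.mp hR with h | h
    · exact Or.inl (Multiset.mem_nsmul.mp h).2
    · exact Or.inr (Multiset.mem_nsmul.mp h).2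
  have hcombRk : memRk k D comb := by
    intro R hR
    rcases hmemcomb R hR with h | h
    · exact h1 R h
    · exact h2 R h
  have hscomb : ∀ R ∈ comb, ∀ v ∈ R.vertices, v ∈ s := by
    intro R hR
    rcases hmemcomb R hR with h | h
    · exact hs1 R h
    · exact hs2 R h
  have hmultcomb : ∀ u, multDU k comb u = (Q:ℤ) * multDU k DU1 u + (P:ℤ) * multDU k DU2 u := by
    intro u
    rw [hcomb, multDU_add, multDU_nsmul, multDU_nsmul]
  have hcombx : multDU k comb x = 0 := by
    rw [hmultcomb, hQ, hP]; ring
  have h0 : 0 ≤ Lk k A B comb := hL comb hcombRk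
  rw [Lk_eq_sum k A B comb s hscomb] at h0
  have hL1 : Lk k A B DU1 = ∑ u ∈ s, gfun A B u (multDU k DU1 u) := Lk_eq_sum _ _ _ _ _ hs1
  have hL2 : Lk k A B DU2 = ∑ u ∈ s, gfun A B u (multDU k DU2 u) := Lk_eq_sum _ _ _ _ _ hs2
  -- split off the point x
  have hsplit0 : ∀ f : Pt n → ℝ, (∑ u ∈ s, f u) = f x + ∑ u ∈ s.erase x, f u :=
    fun f => (Finset.add_sum_erase s f hxs).symm
  have hgx0 : gfun A B x (multDU k comb x) = 0 := by
    rw [hcombx]; simp [gfun]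
  have hgx1 : gfun A B x (multDU k DU1 x) = (multDU k DU1 x : ℝ) * A x := by
    unfold gfun
    rw [if_neg (by exact_mod_cast not_lt.mpr hm1.le), if_pos hm1]
  have hgx2 : gfun A B x (multDU k DU2 x) = (multDU k DU2 x : ℝ) * B x := by
    unfold gfun
    rw [if_pos hm2]
  have hpoint : ∀ u ∈ s.erase x,
      gfun A B u (multDU k comb u) ≤
        (Q:ℝ) * gfun A B u (multDU k DU1 u) + (P:ℝ) * gfun A B u (multDU k DU2 u) := by
    intro u hu
    rw [hmultcomb]
    exact gfun_combo (hAB u (hsD u (Finset.mem_of_mem_erase hu))) P Q _ _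
  have hsum : ∑ u ∈ s.erase x, gfun A B u (multDU k comb u) ≤
      ∑ u ∈ s.erase x, ((Q:ℝ) * gfun A B u (multDU k DU1 u) +
        (P:ℝ) * gfun A B u (multDU k DU2 u)) := Finset.sum_le_sum hpoint
  have hmain : (P:ℝ) * (Q:ℝ) * (B x - A x) ≤ (Q:ℝ) * Lk k A B DU1 + (P:ℝ) * Lk k A B DU2 := by
    have e1 : (Q:ℝ) * Lk k A B DU1 + (P:ℝ) * Lk k A B DU2
        = (Q:ℝ) * ((multDU k DU1 x : ℝ) * A x) + (P:ℝ) * ((multDU k DU2 x : ℝ) * B x) +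
          ∑ u ∈ s.erase x, ((Q:ℝ) * gfun A B u (multDU k DU1 u) +
            (P:ℝ) * gfun A B u (multDU k DU2 u)) := by
      rw [hL1, hL2, hsplit0 (fun u => gfun A B u (multDU k DU1 u)),
        hsplit0 (fun u => gfun A B u (multDU k DU2 u)), hgx1, hgx2,
        Finset.sum_add_distrib, ← Finset.mul_sum, ← Finset.mul_sum]
      ring
    have e2 : (0:ℝ) ≤ ∑ u ∈ s.erase x, gfun A B u (multDU k comb u) := by
      have := hsplit0 (fun u => gfun A B u (multDU k comb u))
      simp only [hgx0, zero_add] at this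
      linarith [h0, this.symm.le]
    have e3 : (Q:ℝ) * ((multDU k DU1 x : ℝ) * A x) + (P:ℝ) * ((multDU k DU2 x : ℝ) * B x)
        = (P:ℝ) * (Q:ℝ) * (B x - A x) := by
      have d1 : ((multDU k DU1 x : ℤ):ℝ) = -(P:ℝ) := by
        have hc : multDU k DU1 x = -(P:ℤ) := by omega
        rw [hc]; push_cast; ring
      have d2 : ((multDU k DU2 x : ℤ):ℝ) = (Q:ℝ) := by
        have hc : multDU k DU2 x = (Q:ℤ) := by omega
        rw [hc]; push_cast; ring
      rw [d1, d2]; ring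
    rw [e1, e3]
    linarith [le_trans e2 hsum]
  have habs1 : |(multDU k DU1 x : ℝ)| = (P:ℝ) := by
    have hc : multDU k DU1 x = -(P:ℤ) := by omega
    rw [abs_of_neg (by exact_mod_cast hm1), hc]; push_cast; ring
  have habs2 : |(multDU k DU2 x : ℝ)| = (Q:ℝ) := by
    have hc : multDU k DU2 x = (Q:ℤ) := by omega
    rw [abs_of_pos (by exact_mod_cast hm2), hc]; push_cast; ring
  rw [habs1, habs2]
  have hPr : (0:ℝ) < (P:ℝ) := by exact_mod_cast hPpos
  have hQr : (0:ℝ) < (Q:ℝ) := by exact_mod_cast hQpos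
  rw [div_add_div _ _ (ne_of_gt hPr) (ne_of_gt hQr), le_div_iff₀ (mul_pos hPr hQr)]
  nlinarith [hmain]

end KIncr

open KIncr
/-- Proposition 2.7: `P⁻ + P⁺ ≥ B - A` on a mesh. -/
theorem stmt1 (n k : ℕ) (hn : 1 ≤ n) (hk1 : 1 ≤ k) (hkn : k ≤ n)
    (D : Set (Pt n)) (hD : IsMesh D) (A B : Pt n → ℝ)
    (hAI : ∀ x ∈ D, A x ∈ Set.Icc (0:ℝ) 1) (hBI : ∀ x ∈ D, B x ∈ Set.Icc (0:ℝ) 1)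
    (hAB : ∀ x ∈ D, A x ≤ B x)
    (hL : ∀ DU : Multiset (Box n), memRk k D DU → 0 ≤ Lk k A B DU)
    (hvert : ∀ v : Pt n, isCubeVertex v → A v = B v) :
    ∀ x ∈ D, B x - A x ≤ Pneg k D A B x + Ppos k D A B x := by
  intro x hx
  obtain ⟨δ, hδ, hDeq⟩ := hD
  by_cases hv : isCubeVertex x
  · have hABx : A x = B x := hvert x hv
    have h1 : 0 ≤ Pneg k D A B x := by
      unfold Pneg
      apply Real.sInf_nonneg
      rintro r ⟨DU, hDU, hm, rfl⟩
      exact div_nonneg (hL DU hDU) (abs_nonneg _)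
    have h2 : 0 ≤ Ppos k D A B x := by
      unfold Ppos
      apply Real.sInf_nonneg
      rintro r ⟨DU, hDU, hm, rfl⟩
      exact div_nonneg (hL DU hDU) (abs_nonneg _)
    linarith
  · simp only [isCubeVertex, not_forall] at hv
    obtain ⟨i₀, hi₀⟩ := hv
    push_neg at hi₀
    obtain ⟨hx0, hx1⟩ := hi₀
    have hxδ : ∀ i, x i ∈ δ i := by rw [hDeq] at hx; exact hx
    obtain ⟨Rm, hRm, hRmD, hRmmult⟩ := exists_box_signed n k hk1 hkn δ
      (fun i => (hδ i).1) (fun i => (hδ i).2.2.2.2.1) (fun i => (hδ i).2.2.2.2.2)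
      x hxδ i₀ hx0 hx1 (-1) (Or.inr rfl)
    obtain ⟨Rp, hRp, hRpD, hRpmult⟩ := exists_box_signed n k hk1 hkn δ
      (fun i => (hδ i).1) (fun i => (hδ i).2.2.2.2.1) (fun i => (hδ i).2.2.2.2.2)
      x hxδ i₀ hx0 hx1 1 (Or.inl rfl)
    have hmultm : multDU k {Rm} x = -1 := by simp [multDU, hRmmult]
    have hmultp : multDU k {Rp} x = 1 := by simp [multDU, hRpmult]
    have hmemm : memRk k D ({Rm} : Multiset (Box n)) := by
      intro R hR
      rw [Multiset.mem_singleton] at hR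
      subst hR
      refine ⟨hRm, fun v hv' => ?_⟩
      rw [hDeq]
      exact hRmD v hv'
    have hmemp : memRk k D ({Rp} : Multiset (Box n)) := by
      intro R hR
      rw [Multiset.mem_singleton] at hR
      subst hR
      refine ⟨hRp, fun v hv' => ?_⟩
      rw [hDeq]
      exact hRpD v hv'
    have hnegNe : Set.Nonempty {r : ℝ | ∃ DU : Multiset (Box n), memRk k D DU ∧
        multDU k DU x < 0 ∧ r = Lk k A B DU / |(multDU k DU x : ℝ)|} :=
      ⟨_, ⟨({Rm} : Multiset (Box n)), hmemm, by rw [hmultm]; norm_num, rfl⟩⟩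
    have hposNe : Set.Nonempty {r : ℝ | ∃ DU : Multiset (Box n), memRk k D DU ∧
        0 < multDU k DU x ∧ r = Lk k A B DU / |(multDU k DU x : ℝ)|} :=
      ⟨_, ⟨({Rp} : Multiset (Box n)), hmemp, by rw [hmultp]; norm_num, rfl⟩⟩
    have hfin : B x - A x - Ppos k D A B x ≤ Pneg k D A B x := by
      unfold Pneg
      apply le_csInf hnegNe
      rintro r1 ⟨DU1, h1, hm1, rfl⟩
      have h2 : B x - A x - Lk k A B DU1 / |(multDU k DU1 x : ℝ)| ≤ Ppos k D A B x := by
        unfold Ppos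
        apply le_csInf hposNe
        rintro r2 ⟨DU2, h2, hm2, rfl⟩
        linarith [key_combo k D A B hAB hL x hx DU1 DU2 h1 h2 hm1 hm2]
      linarith
    linarith
end

section
/- Let A, B : I^n → I be semicopulas with A ≤ B and fix an integer k with 1 ≤ k ≤ n. If B is continuous, then P⁻_k^{(A,B)}(x) ≤ B(x) − A(x) for all x ∈ I^n. If A is continuous, then P⁺_k^{(A,B)}(x) ≤ B(x) − A(x) for all x ∈ I^n. -/
open scoped Classical BigOperators

open KIncr

/-!
Single boxes suffice: a `k`-box `R₀` with `x` as a vertex of sign `∓1` exists whenever the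
infimum defining `P^∓(x)` is not over the empty set, and any such box `R` gives
`P^∓(x) ≤ L({R})`. If a coordinate `x j` vanishes, shrink `R₀` towards `x`: all vertices `u` of
the shrunken box have `u j` small, and a semicopula satisfies `B u ≤ u j`, so `L` is small. If all
coordinates of `x` are positive, take `H` with `#H = k - 1`, `j ∉ H`, and the box
`∏_{i ∈ H} [0, x i] × [x j, t]` (for `P⁻`) or `∏_{i ∈ H} [0, x i] × [t, x j]` (for `P⁺`), the
interval lying in direction `j`. Every vertex except the two endpoints of its edge through `x` in
direction `j` has a zero coordinate, hence contributes at most `0`, so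
`L ≤ B (update x j t) - A x`, resp. `L ≤ B x - A (update x j t)`, and continuity of `B`, resp. `A`,
lets `t → x j`.
-/

theorem Real.sInf_le_of_forall_exists_le_add {s : Set ℝ} {c : ℝ} (hc : 0 ≤ c)
    (h : ∀ ε > 0, ∀ a ∈ s, ∃ b ∈ s, b ≤ c + ε) : sInf s ≤ c := by
  rcases s.eq_empty_or_nonempty with rfl | ⟨a, ha⟩
  · rwa [Real.sInf_empty]
  by_cases hs : BddBelow s
  · refine le_of_forall_pos_le_add fun ε hε => ?_
    obtain ⟨b, hb, hbc⟩ := h ε hε a ha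
    exact (csInf_le hs hb).trans hbc
  · rwa [Real.sInf_of_not_bddBelow hs]

namespace KIncr

open Finset Function

variable {n k : ℕ}

theorem exists_apply_eq_zero_or_forall_pos {x : Pt n} (hx : inCube x) :
    (∃ j, x j = 0) ∨ ∀ i, 0 < x i := by
  by_cases hz : ∃ j, x j = 0
  · exact Or.inl hz
  · exact Or.inr fun i => (hx i).1.lt_of_ne' fun h => hz ⟨i, h⟩

theorem Semicopula.apply_le {B : Pt n → ℝ} (hB : Semicopula B) {u : Pt n} (hu : inCube u)
    (i : Fin n) : B u ≤ u i := by
  have hcube : inCube (update (fun _ => (1 : ℝ)) i (u i)) := fun j => by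
    rcases eq_or_ne j i with rfl | hji
    · simpa using hu j
    · simp [hji]
  calc B u ≤ B (update (fun _ => 1) i (u i)) := hB.2.1 _ _ hu hcube fun j => by
        rcases eq_or_ne j i with rfl | hji
        · simp
        · simpa [hji] using (hu j).2
    _ = u i := hB.2.2 i (u i) (hu i)

namespace Box

theorem mem_vertices_iff {R : Box n} {u : Pt n} : u ∈ R.vertices ↔ R.IsVertex u := by
  simp only [vertices, mem_image, mem_univ, true_and]
  constructor
  · rintro ⟨e, rfl⟩ i
    by_cases h : e i = true <;> simp [h]
  · intro hu
    refine ⟨fun i => decide (u i = R.hi i), funext fun i => ?_⟩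
    by_cases h : u i = R.hi i
    · simp [h]
    · simpa [h] using ((hu i).resolve_right h).symm

theorem card_vertices_le (R : Box n) : #R.vertices ≤ 2 ^ n :=
  card_image_le.trans (by simp)

theorem sign_eq_one_or_neg_one (R : Box n) (v : Pt n) : R.sign k v = 1 ∨ R.sign k v = -1 :=
  neg_one_pow_eq_or ℤ _

theorem mult_of_isVertex {R : Box n} {v : Pt n} (hv : R.IsVertex v) : R.mult k v = R.sign k v :=
  if_pos hv

theorem isVertex_and_sign_of_mult_neg {R : Box n} {v : Pt n} (h : R.mult k v < 0) :
    R.IsVertex v ∧ R.sign k v = -1 := by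
  unfold mult at h
  split_ifs at h with hv
  · exact ⟨hv, (R.sign_eq_one_or_neg_one v).resolve_left (by omega)⟩
  · omega

theorem isVertex_and_sign_of_mult_pos {R : Box n} {v : Pt n} (h : 0 < R.mult k v) :
    R.IsVertex v ∧ R.sign k v = 1 := by
  unfold mult at h
  split_ifs at h with hv
  · exact ⟨hv, (R.sign_eq_one_or_neg_one v).resolve_right (by omega)⟩
  · omega

theorem IsKBox.inCube_of_isVertex {R : Box n} (hR : R.IsKBox k) {v : Pt n} (hv : R.IsVertex v) :
    inCube v := fun i => by
  rcases hv i with h | h <;> rw [h]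
  exacts [hR.1 i, hR.2.1 i]

theorem IsKBox.sign_hi {R : Box n} (hR : R.IsKBox k) : R.sign k R.hi = 1 := by
  have hfilter : univ.filter (fun i => R.hi i = R.lo i) = univ.filter (fun i => ¬R.lo i < R.hi i) :=
    filter_congr fun i _ => ⟨fun h => h.not_gt, fun h => (le_antisymm (hR.2.2.1 i) (not_lt.1 h)).symm⟩
  have hcard := card_filter_add_card_filter_not (s := univ) (fun i => R.lo i < R.hi i)
  rw [hR.2.2.2, card_univ, Fintype.card_fin] at hcard
  rw [sign, hfilter, show #(univ.filter fun i => ¬R.lo i < R.hi i) = n - k by omega]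
  exact Even.neg_one_pow ⟨n - k, rfl⟩

theorem IsKBox.exists_lt_one_of_sign_eq_neg_one {R : Box n} (hR : R.IsKBox k) {x : Pt n}
    (hx : R.IsVertex x) (hs : R.sign k x = -1) : ∃ j, x j < 1 := by
  by_contra! h
  have hxhi : x = R.hi := funext fun i => by
    rcases hx i with hlo | hhi
    · linarith [h i, (hR.2.1 i).2, hR.2.2.1 i]
    · exact hhi
  rw [hxhi, hR.sign_hi] at hs
  omega

noncomputable def signedValue (k : ℕ) (A B : Pt n → ℝ) (R : Box n) (u : Pt n) : ℝ :=
  if R.sign k u = 1 then B u else -A u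

theorem signedValue_le {A B : Pt n → ℝ} (hB : Semicopula B) (hA : MapsToI A) (R : Box n)
    {u : Pt n} (hu : inCube u) (i : Fin n) : R.signedValue k A B u ≤ u i := by
  unfold signedValue
  split_ifs
  · exact hB.apply_le hu i
  · linarith [(hA u hu).1, (hu i).1]

end Box

theorem multDU_singleton (R : Box n) (u : Pt n) : multDU k {R} u = R.mult k u := by
  simp [multDU]

theorem memRk_singleton {R : Box n} (hR : R.IsKBox k) : memRk k (cubeSet n) {R} := by
  intro S hS
  rw [Multiset.mem_singleton.1 hS]
  exact ⟨hR, fun v hv => hR.inCube_of_isVertex (Box.mem_vertices_iff.1 hv)⟩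

theorem Lk_singleton (A B : Pt n → ℝ) (R : Box n) :
    Lk k A B {R} = ∑ u ∈ R.vertices, R.signedValue k A B u := by
  rw [Lk, Multiset.toFinset_singleton, singleton_biUnion]
  refine sum_congr rfl fun u hu => ?_
  rw [multDU_singleton, Box.mult_of_isVertex (Box.mem_vertices_iff.1 hu), Box.signedValue]
  rcases R.sign_eq_one_or_neg_one (k := k) u with h | h <;> simp [h]

theorem exists_mem_mult_neg_of_multDU_neg {DU : Multiset (Box n)} {x : Pt n}
    (h : multDU k DU x < 0) : ∃ R ∈ DU, R.mult k x < 0 := by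
  by_contra! hc
  exact h.not_ge (Multiset.sum_nonneg (by simpa using hc))

theorem exists_mem_mult_pos_of_multDU_pos {DU : Multiset (Box n)} {x : Pt n}
    (h : 0 < multDU k DU x) : ∃ R ∈ DU, 0 < R.mult k x := by
  by_contra! hc
  exact h.not_ge ((Multiset.sum_le_card_nsmul _ 0 (by simpa using hc)).trans_eq (nsmul_zero _))

theorem Pneg_le_of_forall_exists_box {A B : Pt n → ℝ} {x : Pt n} {c : ℝ} (hc : 0 ≤ c)
    (h : ∀ R₀ : Box n, R₀.IsKBox k → R₀.IsVertex x → R₀.sign k x = -1 → ∀ ε > 0,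
      ∃ R : Box n, R.IsKBox k ∧ R.IsVertex x ∧ R.sign k x = -1 ∧ Lk k A B {R} ≤ c + ε) :
    Pneg k (cubeSet n) A B x ≤ c := by
  refine Real.sInf_le_of_forall_exists_le_add hc fun ε hε _ ⟨DU, hDU, hneg, _⟩ => ?_
  obtain ⟨R₀, hR₀, hm₀⟩ := exists_mem_mult_neg_of_multDU_neg hneg
  obtain ⟨hv₀, hs₀⟩ := Box.isVertex_and_sign_of_mult_neg hm₀
  obtain ⟨R, hR, hv, hs, hL⟩ := h R₀ (hDU R₀ hR₀).1 hv₀ hs₀ ε hε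
  have hm : multDU k {R} x = -1 := by rw [multDU_singleton, Box.mult_of_isVertex hv, hs]
  exact ⟨_, ⟨{R}, memRk_singleton hR, by rw [hm]; norm_num, rfl⟩, by simpa [hm] using hL⟩

theorem Ppos_le_of_forall_exists_box {A B : Pt n → ℝ} {x : Pt n} {c : ℝ} (hc : 0 ≤ c)
    (h : ∀ R₀ : Box n, R₀.IsKBox k → R₀.IsVertex x → R₀.sign k x = 1 → ∀ ε > 0,
      ∃ R : Box n, R.IsKBox k ∧ R.IsVertex x ∧ R.sign k x = 1 ∧ Lk k A B {R} ≤ c + ε) :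
    Ppos k (cubeSet n) A B x ≤ c := by
  refine Real.sInf_le_of_forall_exists_le_add hc fun ε hε _ ⟨DU, hDU, hpos, _⟩ => ?_
  obtain ⟨R₀, hR₀, hm₀⟩ := exists_mem_mult_pos_of_multDU_pos hpos
  obtain ⟨hv₀, hs₀⟩ := Box.isVertex_and_sign_of_mult_pos hm₀
  obtain ⟨R, hR, hv, hs, hL⟩ := h R₀ (hDU R₀ hR₀).1 hv₀ hs₀ ε hε
  have hm : multDU k {R} x = 1 := by rw [multDU_singleton, Box.mult_of_isVertex hv, hs]
  exact ⟨_, ⟨{R}, memRk_singleton hR, by rw [hm]; norm_num, rfl⟩, by simpa [hm] using hL⟩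

namespace Box

def homothety (R : Box n) (c : Pt n) (t : ℝ) : Box n :=
  ⟨fun i => c i + t * (R.lo i - c i), fun i => c i + t * (R.hi i - c i)⟩

variable {R : Box n} {c : Pt n} {t : ℝ}

theorem isVertex_homothety (hc : R.IsVertex c) : (R.homothety c t).IsVertex c := fun i => by
  rcases hc i with h | h <;> simp [homothety, ← h]

theorem sign_homothety (ht : t ≠ 0) : (R.homothety c t).sign k c = R.sign k c := by
  have : ∀ i, c i = c i + t * (R.lo i - c i) ↔ c i = R.lo i := fun i => by
    rw [left_eq_add, mul_eq_zero, sub_eq_zero]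
    exact ⟨fun h => (h.resolve_left ht).symm, fun h => Or.inr h.symm⟩
  simp only [sign, homothety, this]

theorem IsKBox.homothety (hR : R.IsKBox k) (hc : R.IsVertex c) (ht₀ : 0 < t) (ht₁ : t ≤ 1) :
    (R.homothety c t).IsKBox k := by
  have hc' := hR.inCube_of_isVertex hc
  have hmem : ∀ {a : ℝ} i, a ∈ Set.Icc (0 : ℝ) 1 → c i + t * (a - c i) ∈ Set.Icc (0 : ℝ) 1 :=
    fun i ha => ⟨by nlinarith [(hc' i).1, ha.1], by nlinarith [(hc' i).2, ha.2]⟩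
  refine ⟨fun i => hmem i (hR.1 i), fun i => hmem i (hR.2.1 i),
    fun i => by simp only [Box.homothety]; gcongr; exact hR.2.2.1 i, ?_⟩
  simpa [Box.homothety, mul_lt_mul_iff_right₀ ht₀] using hR.2.2.2

theorem IsKBox.apply_le_of_isVertex_homothety (hR : R.IsKBox k) (hc : R.IsVertex c) (ht : 0 ≤ t)
    {v : Pt n} (hv : (R.homothety c t).IsVertex v) (i : Fin n) : v i ≤ c i + t := by
  have hc' := hR.inCube_of_isVertex hc
  rcases hv i with h | h <;> rw [h] <;> simp only [Box.homothety]
  · nlinarith [(hc' i).1, (hR.1 i).2]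
  · nlinarith [(hc' i).1, (hR.2.1 i).2]

end Box

theorem exists_box_Lk_le_of_apply_eq_zero {A B : Pt n → ℝ} (hB : Semicopula B) (hA : MapsToI A)
    {R₀ : Box n} (hR₀ : R₀.IsKBox k) {x : Pt n} (hx : R₀.IsVertex x) {j : Fin n} (hj : x j = 0)
    {ε : ℝ} (hε : 0 < ε) :
    ∃ R : Box n, R.IsKBox k ∧ R.IsVertex x ∧ R.sign k x = R₀.sign k x ∧ Lk k A B {R} ≤ ε := by
  set t := min 1 (ε / 2 ^ n)
  have ht₀ : 0 < t := lt_min one_pos (by positivity)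
  set R := R₀.homothety x t
  have hR : R.IsKBox k := hR₀.homothety hx ht₀ (min_le_left _ _)
  refine ⟨R, hR, Box.isVertex_homothety hx, Box.sign_homothety ht₀.ne', ?_⟩
  have hvalue : ∀ u ∈ R.vertices, R.signedValue k A B u ≤ t := fun u hu => by
    have hu' := Box.mem_vertices_iff.1 hu
    have := hR₀.apply_le_of_isVertex_homothety hx ht₀.le hu' j
    rw [hj, zero_add] at this
    exact (R.signedValue_le hB hA (hR.inCube_of_isVertex hu') j).trans this
  calc Lk k A B {R} = ∑ u ∈ R.vertices, R.signedValue k A B u := Lk_singleton A B R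
    _ ≤ #R.vertices * t := by simpa using sum_le_sum hvalue
    _ ≤ 2 ^ n * (ε / 2 ^ n) := by
        gcongr
        · exact_mod_cast R.card_vertices_le
        · exact min_le_right _ _
    _ = ε := by field_simp

/-- The box `∏_{i ∈ H} [0, x i] × [a, b] × ∏_{i ∉ H, i ≠ j} {x i}`, with `[a, b]` in direction `j`. -/
def slabBox (x : Pt n) (H : Finset (Fin n)) (j : Fin n) (a b : ℝ) : Box n :=
  ⟨update (fun i => if i ∈ H then 0 else x i) j a, update x j b⟩

section slabBox

variable {x : Pt n} {H : Finset (Fin n)} {j : Fin n} {a b : ℝ}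

theorem isVertex_slabBox_update_lo : (slabBox x H j a b).IsVertex (update x j a) := fun i => by
  rcases eq_or_ne i j with rfl | hij
  · simp [slabBox]
  · by_cases hiH : i ∈ H <;> simp [slabBox, hij, hiH]

theorem isVertex_slabBox_update_hi : (slabBox x H j a b).IsVertex (update x j b) := fun i => by
  rcases eq_or_ne i j with rfl | hij
  · simp [slabBox]
  · by_cases hiH : i ∈ H <;> simp [slabBox, hij, hiH]

theorem isKBox_slabBox (hx : inCube x) (hjH : j ∉ H) (hH : ∀ i ∈ H, 0 < x i) (ha : 0 ≤ a)
    (hab : a < b) (hb : b ≤ 1) (hk : #H + 1 = k) : (slabBox x H j a b).IsKBox k := by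
  refine ⟨fun i => ?_, fun i => ?_, fun i => ?_, ?_⟩
  · rcases eq_or_ne i j with rfl | hij
    · simpa [slabBox] using ⟨ha, by linarith⟩
    · by_cases hiH : i ∈ H <;> simp [slabBox, hij, hiH, hx i]
  · rcases eq_or_ne i j with rfl | hij
    · simpa [slabBox] using ⟨by linarith, hb⟩
    · simpa [slabBox, hij] using hx i
  · rcases eq_or_ne i j with rfl | hij
    · simpa [slabBox] using hab.le
    · by_cases hiH : i ∈ H <;> simp [slabBox, hij, hiH, (hx i).1]
  · have : univ.filter (fun i => (slabBox x H j a b).lo i < (slabBox x H j a b).hi i) =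
        insert j H := by
      ext i
      simp only [mem_filter, mem_univ, true_and, mem_insert]
      rcases eq_or_ne i j with rfl | hij
      · simpa [slabBox] using hab
      · by_cases hiH : i ∈ H
        · simpa [slabBox, hij, hiH] using hH i hiH
        · simp [slabBox, hij, hiH]
    rw [this, card_insert_of_notMem hjH, hk]

theorem sign_slabBox_update_lo (hjH : j ∉ H) (hH : ∀ i ∈ H, 0 < x i) (hk : #H + 1 = k) :
    (slabBox x H j a b).sign k (update x j a) = -1 := by
  have hfilter : univ.filter (fun i => update x j a i = (slabBox x H j a b).lo i) = univ \ H := by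
    ext i
    simp only [mem_filter, mem_univ, true_and, mem_sdiff]
    rcases eq_or_ne i j with rfl | hij
    · simp [slabBox, hjH]
    · by_cases hiH : i ∈ H
      · simp [slabBox, hij, hiH, (hH i hiH).ne']
      · simp [slabBox, hij, hiH]
  have : #H < n := by simpa using card_lt_univ_of_notMem hjH
  rw [Box.sign, hfilter, card_univ_sdiff, Fintype.card_fin]
  exact Odd.neg_one_pow ⟨n - k, by omega⟩

theorem sign_slabBox_update_hi (hjH : j ∉ H) (hH : ∀ i ∈ H, 0 < x i) (hab : a < b)
    (hk : #H + 1 = k) : (slabBox x H j a b).sign k (update x j b) = 1 := by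
  have : univ.filter (fun i => update x j b i = (slabBox x H j a b).lo i) = univ \ insert j H := by
    ext i
    simp only [mem_filter, mem_univ, true_and, mem_sdiff, mem_insert]
    rcases eq_or_ne i j with rfl | hij
    · simp [slabBox, hab.ne']
    · by_cases hiH : i ∈ H
      · simp [slabBox, hij, hiH, (hH i hiH).ne']
      · simp [slabBox, hij, hiH]
  rw [Box.sign, this, card_univ_sdiff, Fintype.card_fin, card_insert_of_notMem hjH, hk]
  exact Even.neg_one_pow ⟨n - k, rfl⟩

theorem exists_mem_apply_eq_zero_of_isVertex_slabBox {v : Pt n}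
    (hv : (slabBox x H j a b).IsVertex v) (hva : v ≠ update x j a) (hvb : v ≠ update x j b) :
    ∃ i ∈ H, v i = 0 := by
  by_contra! h
  have hvx : ∀ i ≠ j, v i = x i := fun i hij => by
    by_cases hiH : i ∈ H
    · simpa [slabBox, hij, hiH, h i hiH] using hv i
    · simpa [slabBox, hij, hiH] using hv i
  rcases hv j with hj | hj
  · exact hva (eq_update_iff.2 ⟨by simpa [slabBox] using hj, hvx⟩)
  · exact hvb (eq_update_iff.2 ⟨by simpa [slabBox] using hj, hvx⟩)

theorem Lk_slabBox_le {A B : Pt n → ℝ} (hB : Semicopula B) (hA : MapsToI A) (hx : inCube x)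
    (hjH : j ∉ H) (hH : ∀ i ∈ H, 0 < x i) (ha : 0 ≤ a) (hab : a < b) (hb : b ≤ 1)
    (hk : #H + 1 = k) :
    Lk k A B {slabBox x H j a b} ≤ B (update x j b) - A (update x j a) := by
  set S := slabBox x H j a b
  have hS : S.IsKBox k := isKBox_slabBox hx hjH hH ha hab hb hk
  have hne : update x j a ≠ update x j b := fun h => hab.ne (by simpa using congrFun h j)
  have hsub : {update x j a, update x j b} ⊆ S.vertices := by
    simp [insert_subset_iff, Box.mem_vertices_iff, S, isVertex_slabBox_update_lo,
      isVertex_slabBox_update_hi]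
  rw [Lk_singleton]
  calc ∑ u ∈ S.vertices, S.signedValue k A B u
      ≤ ∑ u ∈ {update x j a, update x j b}, S.signedValue k A B u :=
        sum_le_sum_of_subset_of_nonpos' hsub fun v hv hvab => by
          have hv' := Box.mem_vertices_iff.1 hv
          simp only [mem_insert, mem_singleton, not_or] at hvab
          obtain ⟨i, -, hi⟩ := exists_mem_apply_eq_zero_of_isVertex_slabBox hv' hvab.1 hvab.2
          simpa [hi] using S.signedValue_le hB hA (hS.inCube_of_isVertex hv') i
    _ = B (update x j b) - A (update x j a) := by
        rw [sum_pair hne, Box.signedValue, Box.signedValue, sign_slabBox_update_lo hjH hH hk,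
          sign_slabBox_update_hi hjH hH hab hk]
        norm_num
        ring

end slabBox

theorem exists_notMem_card_add_one_eq (hk1 : 1 ≤ k) (hkn : k ≤ n) (j : Fin n) :
    ∃ H : Finset (Fin n), j ∉ H ∧ #H + 1 = k := by
  obtain ⟨H, hH, hcard⟩ := exists_subset_card_eq (s := univ.erase j) (n := k - 1) (by simp; omega)
  exact ⟨H, fun h => by simpa using hH h, by omega⟩

section continuity

open Filter Topology

variable {f : Pt n → ℝ} {x : Pt n} {j : Fin n} {ε : ℝ}

theorem tendsto_apply_update (hf : ContinuousOn f (cubeSet n)) (hx : inCube x) (j : Fin n) :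
    Tendsto (fun t => f (update x j t)) (𝓝[Set.Icc 0 1] (x j)) (𝓝 (f x)) := by
  have hmaps : Set.MapsTo (update x j) (Set.Icc 0 1) (cubeSet n) := fun t ht i => by
    rcases eq_or_ne i j with rfl | hij
    · simpa using ht
    · simpa [hij] using hx i
  have := ((hf (update x j (x j)) (by rwa [update_eq_self])).comp
    (continuous_const.update j continuous_id).continuousWithinAt hmaps).tendsto
  rwa [comp_apply, update_eq_self] at this

theorem exists_mem_Ioc_apply_update_lt (hf : ContinuousOn f (cubeSet n)) (hx : inCube x)
    (hj : x j < 1) (hε : 0 < ε) : ∃ t ∈ Set.Ioc (x j) 1, f (update x j t) < f x + ε := by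
  have := left_nhdsWithin_Ioc_neBot hj
  have hsub : Set.Ioc (x j) 1 ⊆ Set.Icc 0 1 :=
    Set.Ioc_subset_Icc_self.trans (Set.Icc_subset_Icc (hx j).1 le_rfl)
  have hev := ((tendsto_apply_update hf hx j).eventually
    (gt_mem_nhds (lt_add_of_pos_right (f x) hε))).filter_mono (nhdsWithin_mono _ hsub)
  obtain ⟨t, hlt, ht⟩ := (hev.and eventually_mem_nhdsWithin).exists
  exact ⟨t, ht, hlt⟩

theorem exists_mem_Ico_lt_apply_update (hf : ContinuousOn f (cubeSet n)) (hx : inCube x)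
    (hj : 0 < x j) (hε : 0 < ε) : ∃ t ∈ Set.Ico 0 (x j), f x - ε < f (update x j t) := by
  have := right_nhdsWithin_Ico_neBot hj
  have hsub : Set.Ico 0 (x j) ⊆ Set.Icc 0 1 :=
    Set.Ico_subset_Icc_self.trans (Set.Icc_subset_Icc le_rfl (hx j).2)
  have hev := ((tendsto_apply_update hf hx j).eventually
    (lt_mem_nhds (sub_lt_self (f x) hε))).filter_mono (nhdsWithin_mono _ hsub)
  obtain ⟨t, hlt, ht⟩ := (hev.and eventually_mem_nhdsWithin).exists
  exact ⟨t, ht, hlt⟩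

end continuity

section positive

variable {A B : Pt n → ℝ} {x : Pt n} {ε : ℝ}

theorem exists_box_sign_neg_Lk_le (hk1 : 1 ≤ k) (hkn : k ≤ n) (hB : Semicopula B)
    (hA : MapsToI A) (hBc : ContinuousOn B (cubeSet n)) (hx : inCube x) (hpos : ∀ i, 0 < x i)
    {j : Fin n} (hj : x j < 1) (hε : 0 < ε) :
    ∃ R : Box n, R.IsKBox k ∧ R.IsVertex x ∧ R.sign k x = -1 ∧ Lk k A B {R} ≤ B x - A x + ε := by
  obtain ⟨H, hjH, hk⟩ := exists_notMem_card_add_one_eq hk1 hkn j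
  obtain ⟨t, ⟨hjt, ht1⟩, hBt⟩ := exists_mem_Ioc_apply_update_lt hBc hx hj hε
  have hH : ∀ i ∈ H, 0 < x i := fun i _ => hpos i
  have hL := Lk_slabBox_le (A := A) hB hA hx hjH hH (hx j).1 hjt ht1 hk
  rw [update_eq_self] at hL
  refine ⟨slabBox x H j (x j) t, isKBox_slabBox hx hjH hH (hx j).1 hjt ht1 hk, ?_, ?_, by linarith⟩
  · simpa using isVertex_slabBox_update_lo (x := x) (H := H) (j := j) (a := x j) (b := t)
  · simpa using sign_slabBox_update_lo (x := x) (a := x j) (b := t) hjH hH hk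

theorem exists_box_sign_pos_Lk_le (hk1 : 1 ≤ k) (hkn : k ≤ n) (hB : Semicopula B)
    (hA : MapsToI A) (hAc : ContinuousOn A (cubeSet n)) (hx : inCube x) (hpos : ∀ i, 0 < x i)
    (j : Fin n) (hε : 0 < ε) :
    ∃ R : Box n, R.IsKBox k ∧ R.IsVertex x ∧ R.sign k x = 1 ∧ Lk k A B {R} ≤ B x - A x + ε := by
  obtain ⟨H, hjH, hk⟩ := exists_notMem_card_add_one_eq hk1 hkn j
  obtain ⟨t, ⟨ht0, htj⟩, hAt⟩ := exists_mem_Ico_lt_apply_update hAc hx (hpos j) hε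
  have hH : ∀ i ∈ H, 0 < x i := fun i _ => hpos i
  have hL := Lk_slabBox_le (B := B) hB hA hx hjH hH ht0 htj (hx j).2 hk
  rw [update_eq_self] at hL
  refine ⟨slabBox x H j t (x j), isKBox_slabBox hx hjH hH ht0 htj (hx j).2 hk, ?_, ?_, by linarith⟩
  · simpa using isVertex_slabBox_update_hi (x := x) (H := H) (j := j) (a := t) (b := x j)
  · simpa using sign_slabBox_update_hi (x := x) (a := t) (b := x j) hjH hH htj hk

end positive

end KIncr

theorem stmt2_general (n k : ℕ) (hn : 1 ≤ n) (hk1 : 1 ≤ k) (hkn : k ≤ n)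
    (A B : Pt n → ℝ) (hB : Semicopula B)
    (hAI : MapsToI A)
    (hAB : ∀ x : Pt n, inCube x → A x ≤ B x) :
    (ContinuousOn B (cubeSet n) →
      ∀ x : Pt n, inCube x → Pneg k (cubeSet n) A B x ≤ B x - A x) ∧
    (ContinuousOn A (cubeSet n) →
      ∀ x : Pt n, inCube x → Ppos k (cubeSet n) A B x ≤ B x - A x) := by
  constructor
  · intro hBc x hx
    refine Pneg_le_of_forall_exists_box (sub_nonneg.2 (hAB x hx)) fun R₀ hR₀ hv₀ hs₀ ε hε => ?_
    rcases exists_apply_eq_zero_or_forall_pos hx with ⟨j, hj⟩ | hpos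
    · obtain ⟨R, hR, hv, hs, hL⟩ := exists_box_Lk_le_of_apply_eq_zero hB hAI hR₀ hv₀ hj hε
      exact ⟨R, hR, hv, hs.trans hs₀, by linarith [hAB x hx]⟩
    · obtain ⟨j, hj⟩ := hR₀.exists_lt_one_of_sign_eq_neg_one hv₀ hs₀
      exact exists_box_sign_neg_Lk_le hk1 hkn hB hAI hBc hx hpos hj hε
  · intro hAc x hx
    refine Ppos_le_of_forall_exists_box (sub_nonneg.2 (hAB x hx)) fun R₀ hR₀ hv₀ hs₀ ε hε => ?_
    rcases exists_apply_eq_zero_or_forall_pos hx with ⟨j, hj⟩ | hpos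
    · obtain ⟨R, hR, hv, hs, hL⟩ := exists_box_Lk_le_of_apply_eq_zero hB hAI hR₀ hv₀ hj hε
      exact ⟨R, hR, hv, hs.trans hs₀, by linarith [hAB x hx]⟩
    · exact exists_box_sign_pos_Lk_le hk1 hkn hB hAI hAc hx hpos ⟨0, hn⟩ hε

/-- Lemma 2.8: upper bounds for `P⁻` and `P⁺` for semicopulas. -/
theorem stmt2 (n k : ℕ) (hn : 1 ≤ n) (hk1 : 1 ≤ k) (hkn : k ≤ n)
    (A B : Pt n → ℝ) (hA : Semicopula A) (hB : Semicopula B)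
    (hAI : MapsToI A) (hBI : MapsToI B)
    (hAB : ∀ x : Pt n, inCube x → A x ≤ B x) :
    (ContinuousOn B (cubeSet n) →
      ∀ x : Pt n, inCube x → Pneg k (cubeSet n) A B x ≤ B x - A x) ∧
    (ContinuousOn A (cubeSet n) →
      ∀ x : Pt n, inCube x → Ppos k (cubeSet n) A B x ≤ B x - A x) :=
  stmt2_general n k hn hk1 hkn A B hB hAI hAB
end

section
/- Let D be a dense countably infinite mesh in I^n and fix an integer k with 1 ≤ k ≤ n. Let A, B : D → I be functions with A ≤ B and L_k^{(A,B)}(DU) ≥ 0 for all DU ∈ R_k(D). Fix a point x ∈ D and define A' : D → I by A'(u) = A(u) for u ≠ x and A'(x) = A(x) + γ_{k,D}^{(A,B)}(x). Then A ≤ A' ≤ B, L_k^{(A',B)}(DU) ≥ 0 for all DU ∈ R_k(D), and γ_{k,D}^{(A',B)}(x) = 0. -/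
open scoped Classical BigOperators

open KIncr

/-! Raising `A` by `c` at `x` changes `L_k^{(A,B)}(DU)` by `m_DU(x) · c` when `m_DU(x) < 0` and
leaves it unchanged otherwise. So `L_k` stays nonnegative as long as `c ≤ P⁻(x)`, and every
quotient `L_k(DU) / |m_DU(x)|` defining `P⁻(x)` drops by exactly `c`. With `c = γ(x)`, both
`P⁻(x)` and `B(x) - A(x)` drop by `γ(x)`, the smaller of the two, so the new `γ(x)` is `0`. -/

open Function

namespace KIncr

variable {n k : ℕ}

lemma Box.mem_vertices_of_isVertex {R : Box n} {v : Pt n} (h : R.IsVertex v) :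
    v ∈ R.vertices := by
  refine Finset.mem_image.2 ⟨fun i => decide (v i = R.hi i), Finset.mem_univ _, funext fun i => ?_⟩
  by_cases hv : v i = R.hi i
  · simp [hv]
  · simpa [hv] using ((h i).resolve_right hv).symm

lemma mem_biUnion_vertices_of_multDU_ne_zero {DU : Multiset (Box n)} {u : Pt n}
    (h : multDU k DU u ≠ 0) : u ∈ DU.toFinset.biUnion Box.vertices := by
  contrapose! h
  refine Multiset.sum_eq_zero fun z hz => ?_
  obtain ⟨R, hR, rfl⟩ := Multiset.mem_map.1 hz
  exact if_neg fun hv => h <| Finset.mem_biUnion.2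
    ⟨R, Multiset.mem_toFinset.2 hR, Box.mem_vertices_of_isVertex hv⟩

lemma Lk_update_add (A B : Pt n → ℝ) (DU : Multiset (Box n)) (x : Pt n) (c : ℝ) :
    Lk k (update A x (A x + c)) B DU =
      Lk k A B DU + if multDU k DU x < 0 then (multDU k DU x : ℝ) * c else 0 := by
  rw [← sub_eq_iff_eq_add', Lk, Lk, ← Finset.sum_sub_distrib]
  refine (Finset.sum_eq_single x (fun u _ hux => ?_) fun hx => ?_).trans ?_
  · simp [update_of_ne hux]
  · have hm : multDU k DU x = 0 := by
      by_contra hm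
      exact hx (mem_biUnion_vertices_of_multDU_ne_zero hm)
    simp [hm]
  · rcases lt_trichotomy (multDU k DU x) 0 with hm | hm | hm
    · simp [hm, hm.not_gt]
      ring
    · simp [hm]
    · simp [hm, hm.not_gt]

variable {D : Set (Pt n)} {A B : Pt n → ℝ} {x : Pt n}

variable (k D A B x) in
def negRatios : Set ℝ :=
  {r | ∃ DU : Multiset (Box n), memRk k D DU ∧ multDU k DU x < 0 ∧
    r = Lk k A B DU / |(multDU k DU x : ℝ)|}

lemma Pneg_eq_sInf_negRatios : Pneg k D A B x = sInf (negRatios k D A B x) := rfl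

lemma negRatios_update_add (c : ℝ) :
    negRatios k D (update A x (A x + c)) B x = (fun r => r - c) '' negRatios k D A B x := by
  have hdiv : ∀ DU : Multiset (Box n), multDU k DU x < 0 →
      Lk k (update A x (A x + c)) B DU / |(multDU k DU x : ℝ)| =
        Lk k A B DU / |(multDU k DU x : ℝ)| - c := by
    intro DU hm
    have hm' : (multDU k DU x : ℝ) < 0 := by exact_mod_cast hm
    rw [Lk_update_add, if_pos hm, abs_of_neg hm']
    field_simp [hm'.ne]
    ring
  ext r
  constructor
  · rintro ⟨DU, hDU, hm, rfl⟩
    exact ⟨_, ⟨DU, hDU, hm, rfl⟩, (hdiv DU hm).symm⟩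
  · rintro ⟨_, ⟨DU, hDU, hm, rfl⟩, rfl⟩
    exact ⟨DU, hDU, hm, (hdiv DU hm).symm⟩

section NonnegLk

variable (hL : ∀ DU : Multiset (Box n), memRk k D DU → 0 ≤ Lk k A B DU)
include hL

lemma negRatios_subset_Ici : negRatios k D A B x ⊆ Set.Ici 0 := by
  rintro r ⟨DU, hDU, -, rfl⟩
  exact div_nonneg (hL DU hDU) (abs_nonneg _)

lemma Pneg_nonneg : 0 ≤ Pneg k D A B x :=
  Real.sInf_nonneg fun _ hr => negRatios_subset_Ici hL hr

lemma Pneg_le_Lk_div {DU : Multiset (Box n)} (hDU : memRk k D DU) (hm : multDU k DU x < 0) :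
    Pneg k D A B x ≤ Lk k A B DU / |(multDU k DU x : ℝ)| :=
  csInf_le ⟨0, negRatios_subset_Ici hL⟩ ⟨DU, hDU, hm, rfl⟩

lemma gammaK_nonneg (hAB : A x ≤ B x) : 0 ≤ gammaK k D A B x :=
  le_min (Pneg_nonneg hL) (sub_nonneg.2 hAB)

lemma Lk_update_add_nonneg {c : ℝ} (hc : c ≤ Pneg k D A B x) {DU : Multiset (Box n)}
    (hDU : memRk k D DU) : 0 ≤ Lk k (update A x (A x + c)) B DU := by
  rw [Lk_update_add]
  split_ifs with hm
  · have hm' : (multDU k DU x : ℝ) < 0 := by exact_mod_cast hm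
    have hcL : c * |(multDU k DU x : ℝ)| ≤ Lk k A B DU :=
      (le_div_iff₀ (abs_pos.2 hm'.ne)).1 (hc.trans (Pneg_le_Lk_div hL hDU hm))
    rw [abs_of_neg hm'] at hcL
    linarith
  · simpa using hL DU hDU

lemma Pneg_update_add (hne : (negRatios k D A B x).Nonempty) (c : ℝ) :
    Pneg k D (update A x (A x + c)) B x = Pneg k D A B x - c := by
  rw [Pneg_eq_sInf_negRatios, Pneg_eq_sInf_negRatios, negRatios_update_add]
  exact ((OrderIso.subRight c).map_csInf' hne ⟨0, negRatios_subset_Ici hL⟩).symm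

lemma gammaK_update_add_gammaK (hAB : A x ≤ B x) :
    gammaK k D (update A x (A x + gammaK k D A B x)) B x = 0 := by
  rcases (negRatios k D A B x).eq_empty_or_nonempty with hempty | hne
  · -- `inf ∅ = 0` makes `γ(x) = 0`, so nothing changes.
    have hγ : gammaK k D A B x = 0 := by
      rw [gammaK, Pneg_eq_sInf_negRatios, hempty, Real.sInf_empty]
      exact min_eq_left (sub_nonneg.2 hAB)
    rw [hγ, add_zero, update_eq_self, ← hγ]
  · rw [gammaK, Pneg_update_add hL hne, update_self, sub_add_eq_sub_sub, min_sub_sub_right]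
    exact sub_self _

end NonnegLk

end KIncr

theorem stmt5_general (n k : ℕ) (D : Set (Pt n)) (A B : Pt n → ℝ)
    (hAB : ∀ u ∈ D, A u ≤ B u)
    (hL : ∀ DU : Multiset (Box n), memRk k D DU → 0 ≤ Lk k A B DU)
    (x : Pt n) (hx : x ∈ D) (A' : Pt n → ℝ)
    (hA' : ∀ u : Pt n, A' u = if u = x then A x + gammaK k D A B x else A u) :
    (∀ u ∈ D, A u ≤ A' u ∧ A' u ≤ B u) ∧
    (∀ DU : Multiset (Box n), memRk k D DU → 0 ≤ Lk k A' B DU) ∧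
    gammaK k D A' B x = 0 := by
  obtain rfl : A' = update A x (A x + gammaK k D A B x) :=
    funext fun u => by rw [hA', update_apply]
  have hγ_nonneg : 0 ≤ gammaK k D A B x := gammaK_nonneg hL (hAB x hx)
  have hγ_le : gammaK k D A B x ≤ B x - A x := min_le_right _ _
  refine ⟨fun u hu => ?_, fun DU hDU => Lk_update_add_nonneg hL (min_le_left _ _) hDU,
    gammaK_update_add_gammaK hL (hAB x hx)⟩
  rcases eq_or_ne u x with rfl | hux
  · rw [update_self]
    constructor <;> linarith
  · rw [update_of_ne hux]
    exact ⟨le_rfl, hAB u hu⟩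

/-- Proposition 4.1: raising `A` at a single point of a mesh. -/
theorem stmt5 (n k : ℕ) (hn : 1 ≤ n) (hk1 : 1 ≤ k) (hkn : k ≤ n)
    (D : Set (Pt n)) (hD : IsMesh D) (A B : Pt n → ℝ)
    (hAI : ∀ u ∈ D, A u ∈ Set.Icc (0:ℝ) 1) (hBI : ∀ u ∈ D, B u ∈ Set.Icc (0:ℝ) 1)
    (hAB : ∀ u ∈ D, A u ≤ B u)
    (hL : ∀ DU : Multiset (Box n), memRk k D DU → 0 ≤ Lk k A B DU)
    (x : Pt n) (hx : x ∈ D) (A' : Pt n → ℝ)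
    (hA' : ∀ u : Pt n, A' u = if u = x then A x + gammaK k D A B x else A u) :
    (∀ u ∈ D, A u ≤ A' u ∧ A' u ≤ B u) ∧
    (∀ DU : Multiset (Box n), memRk k D DU → 0 ≤ Lk k A' B DU) ∧
    gammaK k D A' B x = 0 :=
  stmt5_general n k D A B hAB hL x hx A' hA'
end
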